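/- arXiv:1410.6046 — 2 statements merged into one kernel-verified Lean document; each statement's English description precedes it below -/
import Mathlib

section
/- In the quasi-consecutive pattern poset, suppose σ occurs exactly once in τ = a_1 a_2 ⋯ a_n, the occurrence is consecutive at the end of τ (i.e., σ is order-isomorphic to a_k a_{k+1} ⋯ a_n for some k > 2), a_1 and a_2 are not consecutive integers, and the occurrence involves neither a_1 nor a_2. Then the interval [σ, τ] has exactly two coatoms, namely the flattenings of τ with a_1 removed and with a_2 removed. -/
open scoped Classical

/-- A finite permutation of arbitrary length: a length `n` together with a
permutation of `Fin n` (in one-line notation, the entry at position `i` is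
its value at `i`). -/
abbrev QPerm : Type := Σ n : ℕ, Equiv.Perm (Fin n)

/-- `IsOcc a σ τ f` : the strictly monotone position map `f` selects an
occurrence of the pattern `σ` in `τ` (order-isomorphically), where for every
gap index `j ≥ 1` (1-indexed) with `a j = false` the `j`-th and `(j+1)`-th
selected positions must be adjacent in `τ`. -/
def IsOcc (a : ℕ → Bool) {k n : ℕ} (σ : Equiv.Perm (Fin k)) (τ : Equiv.Perm (Fin n))
    (f : Fin k → Fin n) : Prop :=
  StrictMono f ∧ (∀ i j : Fin k, σ i < σ j ↔ τ (f i) < τ (f j)) ∧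
    ∀ (i : ℕ) (h : i + 1 < k), a (i + 1) = false →
      (f ⟨i + 1, h⟩ : ℕ) = (f ⟨i, Nat.lt_of_succ_lt h⟩ : ℕ) + 1

/-- `σ` occurs in `τ` as an `a`-vincular pattern. -/
def VOcc (a : ℕ → Bool) (σ τ : QPerm) : Prop :=
  ∃ f : Fin σ.1 → Fin τ.1, IsOcc a σ.2 τ.2 f

/-- Covering relation of the `a`-vincular pattern poset. -/
def VCov (a : ℕ → Bool) (σ τ : QPerm) : Prop :=
  σ.1 + 1 = τ.1 ∧ VOcc a σ τ

/-- The `a`-vincular pattern order: reflexive-transitive closure of covering. -/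
def VLe (a : ℕ → Bool) (σ τ : QPerm) : Prop :=
  Relation.ReflTransGen (VCov a) σ τ

/-- Occurrence as an `A`-vincular pattern for a matrix `A` (rows and columns
1-indexed via `A i j`); a pattern of length `k` uses row `k - 1`. -/
def MOcc (A : ℕ → ℕ → Bool) (σ τ : QPerm) : Prop :=
  VOcc (fun j => A (σ.1 - 1) j) σ τ

/-- Covering relation of the `A`-vincular pattern poset. -/
def MCov (A : ℕ → ℕ → Bool) (σ τ : QPerm) : Prop :=
  σ.1 + 1 = τ.1 ∧ MOcc A σ τ

/-- The `A`-vincular pattern order. -/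
def MLe (A : ℕ → ℕ → Bool) (σ τ : QPerm) : Prop :=
  Relation.ReflTransGen (MCov A) σ τ

/-- The quasi-consecutive adjacency vector `a = (1,0,0,…)` (1-indexed). -/
def qa : ℕ → Bool := fun j => decide (j = 1)

/-- Quasi-consecutive pattern occurrence. -/
def QOcc (σ τ : QPerm) : Prop := VOcc qa σ τ

/-- Covering in the quasi-consecutive pattern poset. -/
def QCov (σ τ : QPerm) : Prop := VCov qa σ τ

/-- The quasi-consecutive pattern poset order. -/
def QLe (σ τ : QPerm) : Prop := VLe qa σ τ

/-- All permutations of length at most `n`, as a finset. -/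
def permsUpTo (n : ℕ) : Finset QPerm :=
  (Finset.range (n + 1)).sigma fun _ => Finset.univ

/-- Möbius function of the quasi-consecutive pattern poset, computed with
fuel (the fuel `τ.1` always suffices, since lengths strictly increase along
the order). -/
noncomputable def qMuAux : ℕ → QPerm → QPerm → ℤ
  | 0, σ, τ => if σ = τ then 1 else 0
  | m + 1, σ, τ =>
      if σ = τ then 1
      else -∑ z ∈ (permsUpTo τ.1).filter fun z => QLe σ z ∧ QLe z τ ∧ z ≠ τ,
            qMuAux m σ z

/-- The Möbius function of the quasi-consecutive pattern poset. -/
noncomputable def qMu (σ τ : QPerm) : ℤ := qMuAux τ.1 σ τ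

/-- The interval `[σ, τ]` in the quasi-consecutive pattern poset. -/
def QInterval (σ τ : QPerm) : Set QPerm := {ρ | QLe σ ρ ∧ QLe ρ τ}

/-- The interval `[σ, τ]` is a chain. -/
def QChain (σ τ : QPerm) : Prop :=
  ∀ ρ₁ ρ₂ : QPerm, ρ₁ ∈ QInterval σ τ → ρ₂ ∈ QInterval σ τ → QLe ρ₁ ρ₂ ∨ QLe ρ₂ ρ₁

/-- The interval `[σ, τ]` is order-isomorphic to the product of a chain with
`p + 1` elements and a chain with `q + 1` elements (componentwise order). -/
def IsGridInterval (σ τ : QPerm) (p q : ℕ) : Prop :=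
  ∃ e : QInterval σ τ ≃ Fin (p + 1) × Fin (q + 1),
    ∀ ρ₁ ρ₂ : QInterval σ τ, QLe ρ₁.1 ρ₂.1 ↔ e ρ₁ ≤ e ρ₂

/-- The occurrence `f` involves position `i` (0-indexed) of the big permutation. -/
def Involves {k n : ℕ} (f : Fin k → Fin n) (i : ℕ) : Prop :=
  ∃ j : Fin k, (f j : ℕ) = i

/-- The occurrence `f` is consecutive: all selected positions are adjacent. -/
def ConsecOcc {k n : ℕ} (f : Fin k → Fin n) : Prop :=
  ∀ (i : ℕ) (h : i + 1 < k),
    (f ⟨i + 1, h⟩ : ℕ) = (f ⟨i, Nat.lt_of_succ_lt h⟩ : ℕ) + 1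

/-- The first two entries of `τ` are not consecutive integers. -/
def NotConsecFirstTwo (τ : QPerm) : Prop :=
  ∀ i j : Fin τ.1, (i : ℕ) = 0 → (j : ℕ) = 1 →
    (τ.2 i : ℕ) + 1 ≠ (τ.2 j : ℕ) ∧ (τ.2 j : ℕ) + 1 ≠ (τ.2 i : ℕ)

/-- `τ` is a monotone (increasing or decreasing) permutation. -/
def IsMonotonePerm (τ : QPerm) : Prop :=
  (∀ i j : Fin τ.1, i < j → τ.2 i < τ.2 j) ∨ (∀ i j : Fin τ.1, i < j → τ.2 j < τ.2 i)

/-!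
A lower cover of `τ` deletes a single position, and the remaining positions must still form a
quasi-consecutive occurrence: every gap except the first one has to stay closed, so only the
first, the second or the last entry can be deleted. Deleting the last entry does not stay
above `σ`: an occurrence of `σ` in the result would be a second occurrence of `σ` in `τ`, since
the given one uses the last position. Deleting the first or the second entry leaves the final
block, hence `σ`, intact. The two flattenings differ because some entry of `τ` has a value
strictly between `a₁` and `a₂`, and it compares differently with the leading entry of each.
-/

open Equiv

lemma Fin.val_succAbove {n : ℕ} (p : Fin (n + 1)) (i : Fin n) :
    (p.succAbove i : ℕ) = if (i : ℕ) < p then (i : ℕ) else (i : ℕ) + 1 := by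
  unfold Fin.succAbove
  split_ifs <;> simp_all [Fin.lt_def]

lemma Fin.notMem_range_succAbove_iff {n : ℕ} {p q : Fin (n + 1)} :
    q ∉ Set.range p.succAbove ↔ (q : ℕ) = p := by
  rw [Fin.range_succAbove, Set.mem_compl_singleton_iff, not_not, Fin.ext_iff]

lemma StrictMono.exists_eq_succAbove {n : ℕ} {g : Fin n → Fin (n + 1)} (hg : StrictMono g) :
    ∃ p : Fin (n + 1), g = p.succAbove := by
  obtain ⟨p, hp⟩ : ∃ p, p ∉ Set.range g := by
    by_contra! h
    simpa using Fintype.card_le_of_surjective g h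
  refine ⟨p, ?_⟩
  have hsort := Finset.orderEmbOfFin_unique (s := {p}ᶜ) (by simp [Finset.card_compl])
    (fun x => by simpa using fun hx => hp ⟨x, hx⟩) hg
  rw [hsort, Finset.orderEmbOfFin_compl_singleton_eq_succAboveOrderEmb]
  rfl

lemma Equiv.Perm.eq_of_lt_iff_lt {k : ℕ} {σ τ : Perm (Fin k)}
    (h : ∀ i j, σ i < σ j ↔ τ i < τ j) : σ = τ := by
  have hmono : StrictMono (τ ∘ σ.symm) := fun x y hxy => (h _ _).mp (by simpa using hxy)
  ext i
  simpa using (congrArg Fin.val (hmono.apply_eq (x := σ i))).symm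

/-- `Tuple.sort v` lists the positions of `v` by increasing value, so its inverse sends each
position to the rank of its value: this is the pattern of `τ` at the positions chosen by `g`. -/
noncomputable def flatten {k n : ℕ} (τ : Perm (Fin n)) (g : Fin k → Fin n) : Perm (Fin k) :=
  (Tuple.sort (τ ∘ g))⁻¹

lemma flatten_lt_flatten_iff {k n : ℕ} (τ : Perm (Fin n)) {g : Fin k → Fin n}
    (hg : Function.Injective g) (i j : Fin k) :
    flatten τ g i < flatten τ g j ↔ τ (g i) < τ (g j) := by
  set v := τ ∘ g
  have hsorted : StrictMono (v ∘ Tuple.sort v) :=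
    (Tuple.monotone_sort v).strictMono_of_injective
      ((τ.injective.comp hg).comp (Tuple.sort v).injective)
  have hv : ∀ x, v x = (v ∘ Tuple.sort v) ((Tuple.sort v)⁻¹ x) := by simp
  rw [show τ (g i) = v i from rfl, show τ (g j) = v j from rfl, hv i, hv j, hsorted.lt_iff_lt]
  rfl

lemma isOcc_iff_eq_flatten {a : ℕ → Bool} {k n : ℕ} {ρ : Perm (Fin k)} {τ : Perm (Fin n)}
    {g : Fin k → Fin n} (hg : StrictMono g) :
    IsOcc a ρ τ g ↔ ρ = flatten τ g ∧ ∀ (i : ℕ) (h : i + 1 < k), a (i + 1) = false →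
      (g ⟨i + 1, h⟩ : ℕ) = (g ⟨i, Nat.lt_of_succ_lt h⟩ : ℕ) + 1 := by
  have hcmp : (∀ i j, ρ i < ρ j ↔ τ (g i) < τ (g j)) ↔ ρ = flatten τ g := by
    simp only [← flatten_lt_flatten_iff τ hg.injective]
    exact ⟨Perm.eq_of_lt_iff_lt, fun h _ _ => h ▸ Iff.rfl⟩
  rw [IsOcc, hcmp]
  exact and_iff_right hg

lemma succAbove_quasiConsecutive_iff {n : ℕ} (p : Fin (n + 1)) :
    (∀ (i : ℕ) (h : i + 1 < n), qa (i + 1) = false →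
      (p.succAbove ⟨i + 1, h⟩ : ℕ) = (p.succAbove ⟨i, Nat.lt_of_succ_lt h⟩ : ℕ) + 1) ↔
    (p : ℕ) ≤ 1 ∨ p = Fin.last n := by
  have hp := p.isLt
  simp only [qa, decide_eq_false_iff_not, Fin.val_succAbove, Fin.ext_iff, Fin.val_last]
  constructor
  · intro h
    by_contra! hp'
    have := h (p - 1) (by omega) (by omega)
    split_ifs at this <;> omega
  · intro hp' i _ _
    split_ifs <;> omega

lemma isOcc_succAbove_iff {n : ℕ} {ρ : Perm (Fin n)} {τ : Perm (Fin (n + 1))}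
    {p : Fin (n + 1)} :
    IsOcc qa ρ τ p.succAbove ↔
      ρ = flatten τ p.succAbove ∧ ((p : ℕ) ≤ 1 ∨ p = Fin.last n) := by
  rw [isOcc_iff_eq_flatten (Fin.strictMono_succAbove p), succAbove_quasiConsecutive_iff]

lemma qCov_iff_exists_succAbove {n : ℕ} {ρ : QPerm} {τ : Perm (Fin (n + 1))} :
    QCov ρ ⟨n + 1, τ⟩ ↔
      ∃ p : Fin (n + 1), ((p : ℕ) ≤ 1 ∨ p = Fin.last n) ∧
        ρ = ⟨n, flatten τ p.succAbove⟩ := by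
  constructor
  · rintro ⟨hlen, g, hg⟩
    obtain ⟨k, ρ⟩ := ρ
    obtain rfl : k = n := Nat.succ_injective hlen
    obtain ⟨p, rfl⟩ := hg.1.exists_eq_succAbove
    obtain ⟨hρ, hp⟩ := isOcc_succAbove_iff.mp hg
    exact ⟨p, hp, congrArg _ hρ⟩
  · rintro ⟨p, hp, rfl⟩
    exact ⟨rfl, p.succAbove, isOcc_succAbove_iff.mpr ⟨rfl, hp⟩⟩

lemma Fin.val_le_val_of_strictMono {k n : ℕ} {f : Fin k → Fin n} (hf : StrictMono f)
    (i : Fin k) : (i : ℕ) ≤ f i := by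
  obtain ⟨i, hi⟩ := i
  induction i with
  | zero => exact Nat.zero_le _
  | succ i ih =>
    have hlt : f ⟨i, by omega⟩ < f ⟨i + 1, hi⟩ := hf (Fin.mk_lt_mk.mpr i.lt_succ_self)
    have := ih (by omega)
    rw [Fin.lt_def] at hlt
    dsimp only at this ⊢
    omega

lemma IsOcc.comp {k l n : ℕ} {σ : Perm (Fin k)} {ρ : Perm (Fin l)} {τ : Perm (Fin n)}
    {f : Fin k → Fin l} {g : Fin l → Fin n} (hf : IsOcc qa σ ρ f) (hg : IsOcc qa ρ τ g) :
    IsOcc qa σ τ (g ∘ f) := by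
  refine ⟨hg.1.comp hf.1, fun i j => (hf.2.1 i j).trans (hg.2.1 _ _), fun i h ha => ?_⟩
  have hi : i ≠ 0 := by rintro rfl; simp [qa] at ha
  have hfi : i ≤ (f ⟨i, Nat.lt_of_succ_lt h⟩ : ℕ) :=
    Fin.val_le_val_of_strictMono hf.1 ⟨i, _⟩
  have hadj : (f ⟨i + 1, h⟩ : ℕ) = f ⟨i, _⟩ + 1 := hf.2.2 i h ha
  have hlt : (f ⟨i, Nat.lt_of_succ_lt h⟩ : ℕ) + 1 < l := hadj ▸ (f ⟨i + 1, h⟩).isLt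
  have hgadj := hg.2.2 _ hlt (by simp only [qa, decide_eq_false_iff_not] at ha ⊢; omega)
  rw [Function.comp_apply, Function.comp_apply,
    show f ⟨i + 1, h⟩ = ⟨_, hlt⟩ from Fin.ext hadj]
  simpa using hgadj

lemma QLe.exists_isOcc {σ τ : QPerm} (h : QLe σ τ) :
    ∃ f : Fin σ.1 → Fin τ.1, IsOcc qa σ.2 τ.2 f := by
  induction h with
  | refl => exact ⟨id, strictMono_id, fun _ _ => Iff.rfl, fun _ _ _ => rfl⟩
  | tail _ hcov ih =>
    obtain ⟨f, hf⟩ := ih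
    obtain ⟨g, hg⟩ := hcov.2
    exact ⟨g ∘ f, hf.comp hg⟩

lemma qLe_of_lt_iff_lt_addNat {k : ℕ} (σ : Perm (Fin k)) :
    ∀ (d : ℕ) (τ : Perm (Fin (k + d))),
    (∀ i j, σ i < σ j ↔ τ (i.addNat d) < τ (j.addNat d)) → QLe ⟨k, σ⟩ ⟨k + d, τ⟩
  | 0, τ, h => by
    obtain rfl : σ = τ := Perm.eq_of_lt_iff_lt h
    exact .refl
  | d + 1, τ, h => by
    have hcov : QCov ⟨k + d, flatten τ (0 : Fin _).succAbove⟩ ⟨k + d + 1, τ⟩ :=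
      qCov_iff_exists_succAbove.mpr ⟨0, .inl (by simp), rfl⟩
    refine .tail (qLe_of_lt_iff_lt_addNat σ d _ fun i j => ?_) hcov
    rw [h, flatten_lt_flatten_iff _ Fin.succAbove_right_injective]
    rfl

lemma ConsecOcc.val_eq {k n : ℕ} {f : Fin k → Fin n} (hc : ConsecOcc f) {i : ℕ} (hi : i < k) :
    (f ⟨i, hi⟩ : ℕ) = f ⟨0, by omega⟩ + i := by
  induction i with
  | zero => rfl
  | succ i ih => rw [hc i hi, ih]; rfl

lemma ConsecOcc.val_add_eq_of_involves {k n : ℕ} {f : Fin k → Fin n} (hc : ConsecOcc f)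
    (hend : Involves f (n - 1)) (i : Fin k) : (f i : ℕ) + k = n + i := by
  obtain ⟨j, hj⟩ := hend
  have hk : 0 < k := j.pos
  have hlast := hc.val_eq (i := k - 1) (by omega)
  have hj' := hc.val_eq j.isLt
  have hi' := hc.val_eq i.isLt
  have hlast_lt := (f ⟨k - 1, by omega⟩).isLt
  simp only [Fin.eta] at hj' hi'
  omega

lemma qLe_flatten_succAbove_of_suffix {k d : ℕ} {σ : Perm (Fin k)} {τ : Perm (Fin (k + d + 1))}
    (hσ : ∀ i j, σ i < σ j ↔ τ (i.addNat (d + 1)) < τ (j.addNat (d + 1)))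
    {p : Fin (k + d + 1)} (hp : (p : ℕ) ≤ d) :
    QLe ⟨k, σ⟩ ⟨k + d, flatten τ p.succAbove⟩ := by
  have hshift (i : Fin k) : p.succAbove (i.addNat d) = i.addNat (d + 1) :=
    Fin.ext (by simp only [Fin.val_succAbove, Fin.val_addNat]; split_ifs <;> omega)
  refine qLe_of_lt_iff_lt_addNat σ d _ fun i j => ?_
  rw [flatten_lt_flatten_iff _ Fin.succAbove_right_injective, hshift, hshift, hσ]

lemma not_qLe_flatten_succAbove_last {k n : ℕ} {σ : Perm (Fin k)} {τ : Perm (Fin (n + 1))}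
    {f : Fin k → Fin (n + 1)} (huniq : ∀ g, IsOcc qa σ τ g → g = f) (hlast : Involves f n) :
    ¬ QLe ⟨k, σ⟩ ⟨n, flatten τ (Fin.last n).succAbove⟩ := by
  intro hle
  obtain ⟨h, hh⟩ := hle.exists_isOcc
  have hocc := hh.comp (isOcc_succAbove_iff.mpr ⟨rfl, .inr rfl⟩)
  obtain ⟨j, hj⟩ := hlast
  rw [← huniq _ hocc] at hj
  exact Fin.succAbove_ne _ (h j) (Fin.ext hj)

lemma flatten_succAbove_ne_of_not_consecutive {m : ℕ} {τ : Perm (Fin (m + 1))}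
    {p q : Fin (m + 1)} (hp : (p : ℕ) = 0) (hq : (q : ℕ) = 1)
    (hnc : (τ p : ℕ) + 1 ≠ τ q ∧ (τ q : ℕ) + 1 ≠ τ p) :
    flatten τ p.succAbove ≠ flatten τ q.succAbove := by
  intro heq
  have hm : 0 < m := by have := q.isLt; omega
  have hpq : (τ p : ℕ) ≠ τ q := fun h => by
    simpa [hp, hq] using congrArg Fin.val (τ.injective (Fin.ext h))
  obtain ⟨r, hr⟩ : ∃ r, (τ r : ℕ) = min (τ p : ℕ) (τ q) + 1 := by
    have := (τ p).isLt
    have := (τ q).isLt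
    exact ⟨τ.symm ⟨min (τ p : ℕ) (τ q) + 1, by omega⟩, by simp⟩
  have hrp : r ≠ p := by rintro rfl; omega
  have hrq : r ≠ q := by rintro rfl; omega
  have hr2 : 2 ≤ (r : ℕ) := by
    have := Fin.val_ne_of_ne hrp
    have := Fin.val_ne_of_ne hrq
    omega
  have hcmp := congrArg (fun ρ : Perm (Fin m) => ρ ⟨0, hm⟩ < ρ ⟨r - 1, by omega⟩) heq
  have hsucc (s : Fin (m + 1)) (hs : (s : ℕ) ≤ 1) : s.succAbove ⟨r - 1, by omega⟩ = r :=
    Fin.ext (by simp only [Fin.val_succAbove]; split_ifs <;> omega)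
  have hp0 : p.succAbove ⟨0, hm⟩ = q := Fin.ext (by simp [Fin.val_succAbove, hp, hq])
  have hq0 : q.succAbove ⟨0, hm⟩ = p := Fin.ext (by simp [Fin.val_succAbove, hp, hq])
  simp only [flatten_lt_flatten_iff _ Fin.succAbove_right_injective, hp0, hq0,
    hsucc p (by omega), hsucc q (by omega), Fin.lt_def, hr] at hcmp
  rw [eq_iff_iff] at hcmp
  rcases Nat.lt_or_gt_of_ne hpq with h | h
  · exact absurd (hcmp.mpr (by omega)) (by omega)
  · exact absurd (hcmp.mp (by omega)) (by omega)

lemma qLe_and_qCov_iff_of_unique_suffix {k d : ℕ} {σ : Perm (Fin k)}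
    {τ : Perm (Fin (k + d + 1))} (hk : 0 < k) (hd : 1 ≤ d)
    (hσ : ∀ i j, σ i < σ j ↔ τ (i.addNat (d + 1)) < τ (j.addNat (d + 1)))
    (huniq : ∀ g, IsOcc qa σ τ g → g = fun i => i.addNat (d + 1)) (ρ : QPerm) :
    QLe ⟨k, σ⟩ ρ ∧ QCov ρ ⟨k + d + 1, τ⟩ ↔
      ∃ p : Fin (k + d + 1), (p : ℕ) ≤ 1 ∧ ρ = ⟨k + d, flatten τ p.succAbove⟩ := by
  rw [qCov_iff_exists_succAbove]
  constructor
  · rintro ⟨hle, p, hp | rfl, rfl⟩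
    · exact ⟨p, hp, rfl⟩
    · refine absurd hle (not_qLe_flatten_succAbove_last huniq ⟨⟨k - 1, by omega⟩, ?_⟩)
      simp only [Fin.val_addNat]
      omega
  · rintro ⟨p, hp, rfl⟩
    exact ⟨qLe_flatten_succAbove_of_suffix hσ (by omega), p, .inl hp, rfl⟩

theorem two_coatoms_general (σ τ : QPerm)
    (f : Fin σ.1 → Fin τ.1) (hf : IsOcc qa σ.2 τ.2 f)
    (huniq : ∀ g : Fin σ.1 → Fin τ.1, IsOcc qa σ.2 τ.2 g → g = f)
    (hc : ConsecOcc f) (hend : Involves f (τ.1 - 1))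
    (h0 : ¬ Involves f 0) (h1 : ¬ Involves f 1)
    (hnc : NotConsecFirstTwo τ) :
    ∃ ρ₀ ρ₁ : QPerm, ρ₀ ≠ ρ₁ ∧
      (∃ g : Fin ρ₀.1 → Fin τ.1, IsOcc qa ρ₀.2 τ.2 g ∧ ρ₀.1 + 1 = τ.1 ∧
        ∀ q : Fin τ.1, q ∉ Set.range g ↔ (q : ℕ) = 0) ∧
      (∃ g : Fin ρ₁.1 → Fin τ.1, IsOcc qa ρ₁.2 τ.2 g ∧ ρ₁.1 + 1 = τ.1 ∧
        ∀ q : Fin τ.1, q ∉ Set.range g ↔ (q : ℕ) = 1) ∧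
      ∀ ρ : QPerm, (QLe σ ρ ∧ QCov ρ τ) ↔ ρ = ρ₀ ∨ ρ = ρ₁ := by
  obtain ⟨k, σ⟩ := σ
  obtain ⟨n, τ⟩ := τ
  dsimp only at *
  have hk : 0 < k := by
    obtain ⟨j, -⟩ := hend
    exact j.pos
  have hpos := hc.val_add_eq_of_involves hend
  obtain ⟨d, rfl, hd⟩ : ∃ d, n = k + d + 1 ∧ 1 ≤ d := by
    have hne0 : (f ⟨0, hk⟩ : ℕ) ≠ 0 := fun h => h0 ⟨_, h⟩
    have hne1 : (f ⟨0, hk⟩ : ℕ) ≠ 1 := fun h => h1 ⟨_, h⟩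
    have hf0 : (f ⟨0, hk⟩ : ℕ) + k = n := hpos ⟨0, hk⟩
    exact ⟨n - k - 1, by omega, by omega⟩
  obtain rfl : f = fun i => i.addNat (d + 1) :=
    funext fun i => Fin.ext (by have := hpos i; simp only [Fin.val_addNat]; omega)
  let p₀ : Fin (k + d + 1) := ⟨0, by omega⟩
  let p₁ : Fin (k + d + 1) := ⟨1, by omega⟩
  refine ⟨⟨k + d, flatten τ p₀.succAbove⟩, ⟨k + d, flatten τ p₁.succAbove⟩,
    fun h => flatten_succAbove_ne_of_not_consecutive rfl rfl (hnc p₀ p₁ rfl rfl)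
      (sigma_mk_injective (β := fun n => Perm (Fin n)) h),
    ⟨_, isOcc_succAbove_iff.mpr ⟨rfl, .inl zero_le_one⟩, rfl,
      fun _ => Fin.notMem_range_succAbove_iff⟩,
    ⟨_, isOcc_succAbove_iff.mpr ⟨rfl, .inl le_rfl⟩, rfl,
      fun _ => Fin.notMem_range_succAbove_iff⟩,
    fun ρ => ?_⟩
  rw [qLe_and_qCov_iff_of_unique_suffix hk hd hf.2.1 huniq]
  constructor
  · rintro ⟨p, hp, rfl⟩
    obtain rfl | rfl : p = p₀ ∨ p = p₁ := by simp only [Fin.ext_iff, p₀, p₁]; omega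
    exacts [.inl rfl, .inr rfl]
  · rintro (rfl | rfl)
    exacts [⟨p₀, zero_le_one, rfl⟩, ⟨p₁, le_rfl, rfl⟩]

/-- If `σ` occurs exactly once in `τ = a₁a₂⋯aₙ`, consecutively at the end of
`τ` (hence starting after position 2), `a₁` and `a₂` are not consecutive
integers, then `[σ,τ]` has exactly two coatoms: the flattenings of `τ` with
`a₁` removed and with `a₂` removed. -/
theorem two_coatoms (σ τ : QPerm) (hle : QLe σ τ) (hσ : 0 < σ.1)
    (f : Fin σ.1 → Fin τ.1) (hf : IsOcc qa σ.2 τ.2 f)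
    (huniq : ∀ g : Fin σ.1 → Fin τ.1, IsOcc qa σ.2 τ.2 g → g = f)
    (hc : ConsecOcc f) (hend : Involves f (τ.1 - 1))
    (h0 : ¬ Involves f 0) (h1 : ¬ Involves f 1)
    (hnc : NotConsecFirstTwo τ) :
    ∃ ρ₀ ρ₁ : QPerm, ρ₀ ≠ ρ₁ ∧
      (∃ g : Fin ρ₀.1 → Fin τ.1, IsOcc qa ρ₀.2 τ.2 g ∧ ρ₀.1 + 1 = τ.1 ∧
        ∀ q : Fin τ.1, q ∉ Set.range g ↔ (q : ℕ) = 0) ∧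
      (∃ g : Fin ρ₁.1 → Fin τ.1, IsOcc qa ρ₁.2 τ.2 g ∧ ρ₁.1 + 1 = τ.1 ∧
        ∀ q : Fin τ.1, q ∉ Set.range g ↔ (q : ℕ) = 1) ∧
      ∀ ρ : QPerm, (QLe σ ρ ∧ QCov ρ τ) ↔ ρ = ρ₀ ∨ ρ = ρ₁ :=
  two_coatoms_general σ τ f hf huniq hc hend h0 h1 hnc
end

section
/- In the quasi-consecutive pattern poset, μ(12, 2413) = 2. In particular, the Möbius function of the quasi-consecutive pattern poset attains values outside {−1, 0, 1}. -/
open scoped Classical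

/-- The permutation `2413` (0-indexed values `1,3,0,2`). -/
def p2413 : Equiv.Perm (Fin 4) :=
  ⟨![1, 3, 0, 2], ![2, 0, 3, 1], by decide, by decide⟩

/-!
The interval `[12, 2413]` has rank two: besides its endpoints it contains exactly the three
permutations `231`, `213`, `312`, each of which covers `12`. Hence
`μ(12, 2413) = -(μ(12, 12) + 3 · (-1)) = 2`; in general `μ` on a rank-two interval is the number
of its atoms minus one.
-/

open Finset

section Decidability

variable {a : ℕ → Bool} {k n : ℕ} {σ : Equiv.Perm (Fin k)} {τ : Equiv.Perm (Fin n)}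

theorem isOcc_iff_forall_fin (f : Fin k → Fin n) :
    IsOcc a σ τ f ↔
      (∀ i j : Fin k, i < j → f i < f j) ∧ (∀ i j : Fin k, σ i < σ j ↔ τ (f i) < τ (f j)) ∧
        ∀ i : Fin k, ∀ h : (i : ℕ) + 1 < k, a ((i : ℕ) + 1) = false →
          (f ⟨i + 1, h⟩ : ℕ) = (f ⟨i, i.isLt⟩ : ℕ) + 1 :=
  and_congr Iff.rfl (and_congr Iff.rfl ⟨fun h i => h i, fun h i hi => h ⟨i, by omega⟩ hi⟩)

instance (f : Fin k → Fin n) : Decidable (IsOcc a σ τ f) :=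
  decidable_of_iff' _ (isOcc_iff_forall_fin f)

end Decidability

instance (a : ℕ → Bool) (σ τ : QPerm) : Decidable (VOcc a σ τ) := by
  unfold VOcc; infer_instance

instance (σ τ : QPerm) : Decidable (QCov σ τ) := by
  unfold QCov VCov; infer_instance

section Order

variable {σ τ : QPerm}

theorem QLe.length_le (h : QLe σ τ) : σ.1 ≤ τ.1 := by
  induction h with
  | refl => rfl
  | tail _ hcov ih => exact ih.trans (Nat.le_of_succ_le hcov.1.le)

theorem QLe.eq_of_length_le (h : QLe σ τ) (hlen : τ.1 ≤ σ.1) : σ = τ := by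
  rcases Relation.ReflTransGen.cases_tail h with rfl | ⟨ρ, hρ, hcov⟩
  · rfl
  · have := QLe.length_le hρ; have := hcov.1; omega

theorem QLe.length_lt_of_ne (h : QLe σ τ) (hne : σ ≠ τ) : σ.1 < τ.1 :=
  h.length_le.lt_of_ne' fun hlen => hne (h.eq_of_length_le hlen.le)

theorem QLe.qCov_of_length_eq_succ (h : QLe σ τ) (hlen : τ.1 = σ.1 + 1) : QCov σ τ := by
  rcases Relation.ReflTransGen.cases_tail h with rfl | ⟨ρ, hρ, hcov⟩
  · omega
  · obtain rfl : σ = ρ := QLe.eq_of_length_le hρ (by have := hcov.1; omega)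
    exact hcov

theorem ne_of_length_ne (h : σ.1 ≠ τ.1) : σ ≠ τ :=
  fun heq => h (congrArg Sigma.fst heq)

end Order

section Mobius

variable {σ τ : QPerm}

noncomputable def qIco (σ τ : QPerm) : Finset QPerm :=
  (permsUpTo τ.1).filter fun ρ => QLe σ ρ ∧ QLe ρ τ ∧ ρ ≠ τ

theorem mem_qIco {ρ : QPerm} : ρ ∈ qIco σ τ ↔ QLe σ ρ ∧ QLe ρ τ ∧ ρ ≠ τ := by
  simp only [qIco, mem_filter, permsUpTo, mem_sigma, mem_range, mem_univ, and_true,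
    and_iff_right_iff_imp]
  exact fun ⟨_, hρτ, _⟩ => Nat.lt_succ_of_le hρτ.length_le

theorem length_lt_of_mem_qIco {ρ : QPerm} (h : ρ ∈ qIco σ τ) : ρ.1 < τ.1 :=
  have ⟨_, hρτ, hne⟩ := mem_qIco.mp h
  hρτ.length_lt_of_ne hne

theorem qMuAux_self (m : ℕ) (σ : QPerm) : qMuAux m σ σ = 1 := by
  cases m <;> simp [qMuAux]

theorem qMuAux_succ_of_ne (m : ℕ) (h : σ ≠ τ) :
    qMuAux (m + 1) σ τ = -∑ ρ ∈ qIco σ τ, qMuAux m σ ρ := by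
  rw [qMuAux, if_neg h, qIco]

theorem qMuAux_succ_of_length_le {m : ℕ} (hτ : τ.1 ≤ m) :
    qMuAux (m + 1) σ τ = qMuAux m σ τ := by
  induction m generalizing σ τ with
  | zero =>
    by_cases h : σ = τ
    · subst h; simp only [qMuAux_self]
    rw [qMuAux_succ_of_ne 0 h, qMuAux, if_neg h, neg_eq_zero]
    exact sum_eq_zero fun ρ hρ => absurd (length_lt_of_mem_qIco hρ) (by omega)
  | succ m ih =>
    by_cases h : σ = τ
    · subst h; simp only [qMuAux_self]
    rw [qMuAux_succ_of_ne _ h, qMuAux_succ_of_ne _ h]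
    refine congrArg Neg.neg (sum_congr rfl fun ρ hρ => ih ?_)
    have := length_lt_of_mem_qIco hρ
    omega

theorem qMuAux_of_length_le {m : ℕ} (h : τ.1 ≤ m) : qMuAux m σ τ = qMu σ τ := by
  induction m, h using Nat.le_induction with
  | base => rfl
  | succ m hm ih => rw [qMuAux_succ_of_length_le hm, ih]

theorem qMu_self (σ : QPerm) : qMu σ σ = 1 :=
  qMuAux_self _ σ

theorem qMu_of_ne (h : σ ≠ τ) : qMu σ τ = -∑ ρ ∈ qIco σ τ, qMu σ ρ := by
  rw [← qMuAux_of_length_le (Nat.le_succ τ.1), qMuAux_succ_of_ne _ h]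
  exact congrArg Neg.neg (sum_congr rfl fun ρ hρ =>
    qMuAux_of_length_le (length_lt_of_mem_qIco hρ).le)

theorem qIco_of_qCov (h : QCov σ τ) : qIco σ τ = {σ} := by
  have hlen := h.1
  ext ρ
  rw [mem_qIco, mem_singleton]
  constructor
  · rintro ⟨hσρ, hρτ, hρ⟩
    have := hρτ.length_lt_of_ne hρ
    exact (hσρ.eq_of_length_le (by omega)).symm
  · rintro rfl
    exact ⟨.refl, .single h, ne_of_length_ne (by omega)⟩

theorem qMu_of_qCov (h : QCov σ τ) : qMu σ τ = -1 := by
  rw [qMu_of_ne (ne_of_length_ne (by have := h.1; omega)), qIco_of_qCov h, sum_singleton,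
    qMu_self]

def middleCovers (σ τ : QPerm) : Finset (Equiv.Perm (Fin (σ.1 + 1))) :=
  univ.filter fun e => QCov σ ⟨_, e⟩ ∧ QCov ⟨_, e⟩ τ

theorem qLe_of_mem_middleCovers {e : Equiv.Perm (Fin (σ.1 + 1))} (he : e ∈ middleCovers σ τ) :
    QLe σ τ :=
  have ⟨hσe, heτ⟩ := (mem_filter.mp he).2
  .head hσe (.single heτ)

theorem qIco_eq_insert_map_middleCovers (hlen : τ.1 = σ.1 + 2) (hle : QLe σ τ) :
    qIco σ τ = insert σ ((middleCovers σ τ).map (.sigmaMk (σ.1 + 1))) := by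
  ext ρ
  simp only [mem_qIco, mem_insert, mem_map, middleCovers, mem_filter, mem_univ, true_and,
    Function.Embedding.sigmaMk_apply]
  constructor
  · rintro ⟨hσρ, hρτ, hne⟩
    have := hρτ.length_lt_of_ne hne
    rcases Nat.lt_or_ge σ.1 ρ.1 with hlt | hge
    · obtain ⟨n, e⟩ := ρ
      obtain rfl : n = σ.1 + 1 := by dsimp only at *; omega
      exact Or.inr ⟨e, ⟨hσρ.qCov_of_length_eq_succ rfl, hρτ.qCov_of_length_eq_succ hlen⟩, rfl⟩
    · exact Or.inl (hσρ.eq_of_length_le hge).symm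
  · rintro (rfl | ⟨e, ⟨hσe, heτ⟩, rfl⟩)
    · exact ⟨.refl, hle, ne_of_length_ne (by omega)⟩
    · exact ⟨.single hσe, .single heτ, ne_of_length_ne (by dsimp only; omega)⟩

theorem qMu_eq_card_middleCovers_sub_one (hlen : τ.1 = σ.1 + 2) (hle : QLe σ τ) :
    qMu σ τ = #(middleCovers σ τ) - 1 := by
  have hσ : σ ∉ (middleCovers σ τ).map (.sigmaMk (σ.1 + 1)) := by
    simp [ne_of_length_ne]
  rw [qMu_of_ne (ne_of_length_ne (by omega)), qIco_eq_insert_map_middleCovers hlen hle,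
    sum_insert hσ, qMu_self, sum_map,
    sum_congr rfl fun e he => qMu_of_qCov (mem_filter.mp he).2.1]
  simp only [sum_const, nsmul_eq_mul, mul_neg, mul_one]
  ring

end Mobius

theorem card_middleCovers_12_2413 :
    #(middleCovers ⟨2, Equiv.refl (Fin 2)⟩ ⟨4, p2413⟩) = 3 := by
  decide

/-- In the quasi-consecutive pattern poset, `μ(12, 2413) = 2`; in
particular, the Möbius function attains values outside `{-1, 0, 1}`. -/
theorem mu_12_2413_eq_two :
    qMu ⟨2, Equiv.refl (Fin 2)⟩ ⟨4, p2413⟩ = 2 ∧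
      ∃ σ τ : QPerm, qMu σ τ ≠ -1 ∧ qMu σ τ ≠ 0 ∧ qMu σ τ ≠ 1 := by
  obtain ⟨e, he⟩ := card_pos.mp (card_middleCovers_12_2413 ▸ three_pos)
  have hmu : qMu ⟨2, Equiv.refl (Fin 2)⟩ ⟨4, p2413⟩ = 2 := by
    rw [qMu_eq_card_middleCovers_sub_one rfl (qLe_of_mem_middleCovers he),
      card_middleCovers_12_2413]
    norm_num
  exact ⟨hmu, _, _, by rw [hmu]; decide⟩
end
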